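/- The period function satisfies the asymptotic T(z) ~ -3 ln z as z → 0^+, i.e. lim_{z→0^+} T(z)/(-3 ln z) = 1. -/

import Mathlib

/-!
Let `r₁ < r₂ < r₃` be the roots of `x (1 - x)² = 4 z`; for small `z`, `r₁ ≍ z`, `r₂ < 1` and
`r₃ - r₂ ≍ √z`. Then `T z = 2 ∫_{r₁}^{r₂} (x (x - r₁) (r₂ - x) (r₃ - x))^(-1/2) dx`, and we cut the
integral at `δ` and `1 - δ`. On `[r₁, δ]` the integrand is `(x (x - r₁))^(-1/2)` up to a factor in
`[1, 1 + 4δ]`, and this model integrates in closed form to `-log r₁ + O(log δ) = -log z + O_δ(1)`.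
Symmetrically, on `[1 - δ, r₂]` the model `((r₂ - x) (r₃ - x))^(-1/2)` contributes
`-log (r₃ - r₂) + O_δ(1) = -½ log z + O_δ(1)`, while the middle part is `O(δ⁻²)`. Hence
`-3 log z - C ≤ T z ≤ (1 + 4δ) (-3 log z) + C_δ` for every small `δ > 0`.
-/

open Set Real Filter

/-- θ(w) ∈ (0,π) with cos θ(w) = 2w - 1. -/
noncomputable def theta (w : ℝ) : ℝ := Real.arccos (2 * w - 1)

/-- Smallest root of x(1-x)² = 4z in (0,1). -/
noncomputable def xminf (z : ℝ) : ℝ := (2 / 3) * (1 - Real.sin (theta (27 * z) / 3 + π / 6))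

/-- Largest root of x(1-x)² = 4z in (0,1). -/
noncomputable def xmaxf (z : ℝ) : ℝ := (2 / 3) * (1 + Real.sin (theta (27 * z) / 3 - π / 6))

/-- The period function T(z) = 2∫_{xmin(z)}^{xmax(z)} dx/√(x²(1-x)² - 4zx). -/
noncomputable def Tfun (z : ℝ) : ℝ :=
  2 * ∫ x in xminf z..xmaxf z, 1 / Real.sqrt (x ^ 2 * (1 - x) ^ 2 - 4 * z * x)

open MeasureTheory Topology

theorem tendsto_div_one_of_bounds {α : Type*} {l : Filter α} {f L : α → ℝ}
    (hL : Tendsto L l atTop) (hlow : ∃ C, ∀ᶠ x in l, L x - C ≤ f x)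
    (hup : ∀ ε > 0, ∃ C, ∀ᶠ x in l, f x ≤ (1 + ε) * L x + C) :
    Tendsto (fun x => f x / L x) l (𝓝 1) := by
  have hsmall (C : ℝ) : Tendsto (fun x => C / L x) l (𝓝 0) := tendsto_const_nhds.div_atTop hL
  refine tendsto_order.2 ⟨fun a ha => ?_, fun a ha => ?_⟩
  · obtain ⟨C, hC⟩ := hlow
    filter_upwards [hC, hL.eventually_gt_atTop 0,
      (hsmall C).eventually (gt_mem_nhds (sub_pos.2 ha))] with x hx hLx hCx
    calc a < 1 - C / L x := by linarith
      _ = (L x - C) / L x := by field_simp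
      _ ≤ f x / L x := by gcongr
  · obtain ⟨C, hC⟩ := hup ((a - 1) / 2) (by linarith)
    filter_upwards [hC, hL.eventually_gt_atTop 0,
      (hsmall C).eventually (gt_mem_nhds (by linarith : (0 : ℝ) < (a - 1) / 2))] with x hx hLx hCx
    calc f x / L x ≤ ((1 + (a - 1) / 2) * L x + C) / L x := by gcongr
      _ = 1 + (a - 1) / 2 + C / L x := by field_simp
      _ < a := by linarith

theorem IntervalIntegrable.of_nonneg_of_le_Ioo {f g : ℝ → ℝ} {a b : ℝ} (hab : a ≤ b)
    (hg : IntervalIntegrable g volume a b) (hf : Measurable f)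
    (hf0 : ∀ x ∈ Ioo a b, 0 ≤ f x) (hfg : ∀ x ∈ Ioo a b, f x ≤ g x) :
    IntervalIntegrable f volume a b := by
  refine hg.mono_fun' hf.aestronglyMeasurable ?_
  rw [uIoc_of_le hab, Measure.restrict_congr_set Ioo_ae_eq_Ioc.symm]
  filter_upwards [ae_restrict_mem measurableSet_Ioo] with x hx
  rw [Real.norm_of_nonneg (hf0 x hx)]
  exact hfg x hx

theorem integral_sandwich {f m : ℝ → ℝ} {a b K : ℝ} (hab : a ≤ b)
    (hm : IntervalIntegrable m volume a b) (hf : Measurable f)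
    (hm0 : ∀ x ∈ Ioo a b, 0 ≤ m x) (hmf : ∀ x ∈ Ioo a b, m x ≤ f x)
    (hfm : ∀ x ∈ Ioo a b, f x ≤ K * m x) :
    IntervalIntegrable f volume a b ∧ ∫ x in a..b, m x ≤ ∫ x in a..b, f x ∧
      ∫ x in a..b, f x ≤ K * ∫ x in a..b, m x := by
  have hfi : IntervalIntegrable f volume a b :=
    .of_nonneg_of_le_Ioo hab (hm.const_mul K) hf
      (fun x hx => (hm0 x hx).trans (hmf x hx)) hfm
  refine ⟨hfi, intervalIntegral.integral_mono_on_of_le_Ioo hab hm hfi hmf, ?_⟩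
  rw [← intervalIntegral.integral_const_mul]
  exact intervalIntegral.integral_mono_on_of_le_Ioo hab hfi (hm.const_mul K) hfm

theorem hasDerivAt_two_mul_log_sqrt_add_sqrt_sub {a x : ℝ} (ha : 0 ≤ a) (hx : a < x) :
    HasDerivAt (fun y => 2 * log (√y + √(y - a))) (√(x * (x - a)))⁻¹ x := by
  have hx0 : 0 < x := ha.trans_lt hx
  have hxa : 0 < x - a := sub_pos.2 hx
  have := Real.sqrt_pos.2 hx0
  have := Real.sqrt_pos.2 hxa
  have hsum : HasDerivAt (fun y => √y + √(y - a)) (1 / (2 * √x) + 1 / (2 * √(x - a))) x :=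
    ((hasDerivAt_id' x).sqrt hx0.ne').add (((hasDerivAt_id' x).sub_const a).sqrt hxa.ne')
  refine ((hsum.log (by positivity)).const_mul 2).congr_deriv ?_
  rw [Real.sqrt_mul hx0.le]
  field_simp
  ring

theorem integral_inv_sqrt_mul_sub {a b : ℝ} (ha : 0 < a) (hab : a ≤ b) :
    IntervalIntegrable (fun x => (√(x * (x - a)))⁻¹) volume a b ∧
      ∫ x in a..b, (√(x * (x - a)))⁻¹ = 2 * log (√b + √(b - a)) - log a := by
  have hcont : ContinuousOn (fun y => 2 * log (√y + √(y - a))) (Icc a b) := by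
    refine continuousOn_const.mul (ContinuousOn.log (by fun_prop) fun x hx => ?_)
    have := Real.sqrt_pos.2 (ha.trans_le hx.1)
    positivity
  have hderiv : ∀ x ∈ Ioo a b, HasDerivAt (fun y => 2 * log (√y + √(y - a))) (√(x * (x - a)))⁻¹ x :=
    fun x hx => hasDerivAt_two_mul_log_sqrt_add_sqrt_sub ha.le hx.1
  have hint : IntervalIntegrable (fun x => (√(x * (x - a)))⁻¹) volume a b :=
    (intervalIntegrable_iff_integrableOn_Ioc_of_le hab).2
      (intervalIntegral.integrableOn_deriv_of_nonneg hcont hderiv fun x _ => by positivity)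
  refine ⟨hint, ?_⟩
  rw [intervalIntegral.integral_eq_sub_of_hasDerivAt_of_le hab hcont hderiv hint, sub_self,
    Real.sqrt_zero, add_zero, Real.log_sqrt ha.le]
  ring

theorem integral_inv_sqrt_sub_mul_sub {c p q : ℝ} (hcp : c ≤ p) (hpq : p < q) :
    IntervalIntegrable (fun x => (√((p - x) * (q - x)))⁻¹) volume c p ∧
      ∫ x in c..p, (√((p - x) * (q - x)))⁻¹ = 2 * log (√(q - c) + √(p - c)) - log (q - p) := by
  have hreflect : (fun x => (√((p - x) * (q - x)))⁻¹)
      = fun x => (fun y => (√(y * (y - (q - p))))⁻¹) (q - x) := by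
    ext x; ring_nf
  obtain ⟨hint, hval⟩ := integral_inv_sqrt_mul_sub (sub_pos.2 hpq) (by linarith : q - p ≤ q - c)
  rw [hreflect, intervalIntegral.integral_comp_sub_left (fun y => (√(y * (y - (q - p))))⁻¹), hval,
    show q - c - (q - p) = p - c by ring]
  refine ⟨?_, rfl⟩
  simpa only [sub_sub_cancel] using (hint.comp_sub_left q).symm

theorem one_le_inv_sqrt {B : ℝ} (h0 : 0 < B) (h1 : B ≤ 1) : 1 ≤ (√B)⁻¹ :=
  (one_le_inv₀ (Real.sqrt_pos.2 h0)).2 (Real.sqrt_le_one.2 h1)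

theorem inv_sqrt_le_inv {B k : ℝ} (hk : 0 < k) (h : k ^ 2 ≤ B) : (√B)⁻¹ ≤ k⁻¹ :=
  inv_anti₀ hk ((Real.le_sqrt' hk).2 h)

theorem inv_one_sub_two_mul_le {δ : ℝ} (h0 : 0 ≤ δ) (h : δ ≤ 1 / 4) :
    (1 - 2 * δ)⁻¹ ≤ 1 + 4 * δ := by
  rw [inv_le_iff_one_le_mul₀ (by linarith)]
  nlinarith

theorem log_le_two_mul_log_sqrt_add_sqrt {p : ℝ} (hp : 0 < p) (q : ℝ) :
    log p ≤ 2 * log (√p + √q) := by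
  have hlog : log p = 2 * log √p := by rw [Real.log_sqrt hp.le]; ring
  rw [hlog]
  gcongr
  exact le_add_of_nonneg_right (Real.sqrt_nonneg q)

theorem two_mul_log_sqrt_add_sqrt_nonpos {p q : ℝ} (hp : 0 ≤ p) (hq : 0 ≤ q)
    (h : p + q ≤ 1 / 2) : 2 * log (√p + √q) ≤ 0 := by
  have hp' := Real.sq_sqrt hp
  have hq' := Real.sq_sqrt hq
  have hsum : √p + √q ≤ 1 := by
    nlinarith [sq_nonneg (√p - √q), Real.sqrt_nonneg p, Real.sqrt_nonneg q]
  have := Real.log_nonpos (by positivity) hsum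
  linarith

noncomputable def periodIntegrand (r₁ r₂ r₃ x : ℝ) : ℝ :=
  (√(x * (x - r₁)))⁻¹ * (√((r₂ - x) * (r₃ - x)))⁻¹

theorem periodIntegrand_nonneg (r₁ r₂ r₃ x : ℝ) : 0 ≤ periodIntegrand r₁ r₂ r₃ x := by
  unfold periodIntegrand; positivity

theorem measurable_periodIntegrand (r₁ r₂ r₃ : ℝ) : Measurable (periodIntegrand r₁ r₂ r₃) := by
  unfold periodIntegrand; fun_prop

structure RootsNearEnds (δ r₁ r₂ r₃ : ℝ) : Prop where
  δ_le : δ ≤ 1 / 8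
  r₁_pos : 0 < r₁
  r₁_le : r₁ ≤ δ / 2
  r₂_ge : 1 - δ / 2 ≤ r₂
  r₂_lt_one : r₂ < 1
  r₂_lt_r₃ : r₂ < r₃
  r₂_mul_r₃_le : r₂ * r₃ ≤ 1

namespace RootsNearEnds

variable {δ r₁ r₂ r₃ : ℝ}

theorem δ_pos (h : RootsNearEnds δ r₁ r₂ r₃) : 0 < δ := by
  linarith [h.r₁_pos, h.r₁_le]

theorem integral_near_zero (h : RootsNearEnds δ r₁ r₂ r₃) :
    IntervalIntegrable (periodIntegrand r₁ r₂ r₃) volume r₁ δ ∧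
      log δ - log r₁ ≤ ∫ x in r₁..δ, periodIntegrand r₁ r₂ r₃ x ∧
      ∫ x in r₁..δ, periodIntegrand r₁ r₂ r₃ x ≤ (1 + 4 * δ) * -log r₁ := by
  have hδ := h.δ_pos
  obtain ⟨hδ₈, hr₁, hr₁δ₂, hr₂, -, hr₂₃, hr₂r₃⟩ := h
  have hr₁δ : r₁ ≤ δ := by linarith
  obtain ⟨hint, hval⟩ := integral_inv_sqrt_mul_sub hr₁ hr₁δ
  have hfactor : ∀ x ∈ Ioo r₁ δ, 1 ≤ (√((r₂ - x) * (r₃ - x)))⁻¹ ∧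
      (√((r₂ - x) * (r₃ - x)))⁻¹ ≤ 1 + 4 * δ := by
    intro x ⟨hx₁, hx₂⟩
    refine ⟨one_le_inv_sqrt (by nlinarith) (by nlinarith), ?_⟩
    calc (√((r₂ - x) * (r₃ - x)))⁻¹ ≤ (1 - 2 * δ)⁻¹ :=
          inv_sqrt_le_inv (by linarith) (by nlinarith)
      _ ≤ 1 + 4 * δ := inv_one_sub_two_mul_le hδ.le (by linarith)
  obtain ⟨hfint, hlow, hup⟩ := integral_sandwich hr₁δ hint (measurable_periodIntegrand r₁ r₂ r₃)
    (fun x _ => by positivity)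
    (fun x hx => le_mul_of_one_le_right (by positivity) (hfactor x hx).1)
    (fun x hx => by
      rw [periodIntegrand, mul_comm (1 + 4 * δ)]
      exact mul_le_mul_of_nonneg_left (hfactor x hx).2 (by positivity))
  rw [hval] at hlow hup
  refine ⟨hfint, ?_, hup.trans ?_⟩
  · linarith [log_le_two_mul_log_sqrt_add_sqrt hδ (δ - r₁)]
  · gcongr
    linarith [two_mul_log_sqrt_add_sqrt_nonpos hδ.le (sub_nonneg.2 hr₁δ) (by linarith)]

theorem integral_middle (h : RootsNearEnds δ r₁ r₂ r₃) :
    IntervalIntegrable (periodIntegrand r₁ r₂ r₃) volume δ (1 - δ) ∧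
      ∫ x in δ..(1 - δ), periodIntegrand r₁ r₂ r₃ x ≤ 4 / δ ^ 2 := by
  have hδ := h.δ_pos
  obtain ⟨hδ₈, -, hr₁δ₂, hr₂, -, hr₂₃, -⟩ := h
  have hbound : ∀ x ∈ Ioo δ (1 - δ), periodIntegrand r₁ r₂ r₃ x ≤ 4 / δ ^ 2 := by
    intro x ⟨hx₁, hx₂⟩
    calc periodIntegrand r₁ r₂ r₃ x ≤ (δ / 2)⁻¹ * (δ / 2)⁻¹ :=
          mul_le_mul (inv_sqrt_le_inv (by positivity) (by nlinarith))
            (inv_sqrt_le_inv (by positivity) (by nlinarith)) (by positivity) (by positivity)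
      _ = 4 / δ ^ 2 := by field_simp; ring
  have hint : IntervalIntegrable (periodIntegrand r₁ r₂ r₃) volume δ (1 - δ) :=
    .of_nonneg_of_le_Ioo (by linarith) intervalIntegrable_const
      (measurable_periodIntegrand r₁ r₂ r₃) (fun x _ => periodIntegrand_nonneg r₁ r₂ r₃ x) hbound
  refine ⟨hint, ?_⟩
  calc ∫ x in δ..(1 - δ), periodIntegrand r₁ r₂ r₃ x ≤ ∫ _ in δ..(1 - δ), 4 / δ ^ 2 :=
        intervalIntegral.integral_mono_on_of_le_Ioo (by linarith) hint intervalIntegrable_const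
          hbound
    _ = (1 - 2 * δ) * (4 / δ ^ 2) := by rw [intervalIntegral.integral_const, smul_eq_mul]; ring
    _ ≤ 4 / δ ^ 2 := mul_le_of_le_one_left (by positivity) (by linarith)

theorem integral_near_one (h : RootsNearEnds δ r₁ r₂ r₃) :
    IntervalIntegrable (periodIntegrand r₁ r₂ r₃) volume (1 - δ) r₂ ∧
      log (δ / 2) - log (r₃ - r₂) ≤ ∫ x in (1 - δ)..r₂, periodIntegrand r₁ r₂ r₃ x ∧
      ∫ x in (1 - δ)..r₂, periodIntegrand r₁ r₂ r₃ x ≤ (1 + 4 * δ) * -log (r₃ - r₂) := by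
  have hδ := h.δ_pos
  obtain ⟨hδ₈, hr₁, hr₁δ₂, hr₂, hr₂₁, hr₂₃, hr₂r₃⟩ := h
  have hr₃ : r₃ ≤ 1 + δ := by nlinarith
  have hδr₂ : 1 - δ ≤ r₂ := by linarith
  obtain ⟨hint, hval⟩ := integral_inv_sqrt_sub_mul_sub hδr₂ hr₂₃
  have hfactor : ∀ x ∈ Ioo (1 - δ) r₂, 1 ≤ (√(x * (x - r₁)))⁻¹ ∧
      (√(x * (x - r₁)))⁻¹ ≤ 1 + 4 * δ := by
    intro x ⟨hx₁, hx₂⟩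
    refine ⟨one_le_inv_sqrt (by nlinarith) (by nlinarith), ?_⟩
    calc (√(x * (x - r₁)))⁻¹ ≤ (1 - 2 * δ)⁻¹ := inv_sqrt_le_inv (by linarith) (by nlinarith)
      _ ≤ 1 + 4 * δ := inv_one_sub_two_mul_le hδ.le (by linarith)
  obtain ⟨hfint, hlow, hup⟩ := integral_sandwich hδr₂ hint (measurable_periodIntegrand r₁ r₂ r₃)
    (fun x _ => by positivity)
    (fun x hx => le_mul_of_one_le_left (by positivity) (hfactor x hx).1)
    (fun x hx => by
      rw [periodIntegrand]
      exact mul_le_mul_of_nonneg_right (hfactor x hx).2 (by positivity))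
  rw [hval] at hlow hup
  refine ⟨hfint, ?_, hup.trans ?_⟩
  · have hlog := log_le_two_mul_log_sqrt_add_sqrt (p := r₂ - (1 - δ)) (by linarith) (r₃ - (1 - δ))
    have hδ₂ : log (δ / 2) ≤ log (r₂ - (1 - δ)) := Real.log_le_log (by positivity) (by linarith)
    rw [add_comm] at hlog
    linarith
  · gcongr
    linarith [two_mul_log_sqrt_add_sqrt_nonpos (p := r₃ - (1 - δ)) (q := r₂ - (1 - δ))
      (by linarith) (by linarith) (by linarith)]

theorem integral_bounds (h : RootsNearEnds δ r₁ r₂ r₃) :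
    log δ + log (δ / 2) - log r₁ - log (r₃ - r₂) ≤ ∫ x in r₁..r₂, periodIntegrand r₁ r₂ r₃ x ∧
      ∫ x in r₁..r₂, periodIntegrand r₁ r₂ r₃ x ≤
        (1 + 4 * δ) * (-log r₁ - log (r₃ - r₂)) + 4 / δ ^ 2 := by
  obtain ⟨hint₁, hlow₁, hup₁⟩ := h.integral_near_zero
  obtain ⟨hint₂, hup₂⟩ := h.integral_middle
  obtain ⟨hint₃, hlow₃, hup₃⟩ := h.integral_near_one
  have hlow₂ : 0 ≤ ∫ x in δ..(1 - δ), periodIntegrand r₁ r₂ r₃ x :=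
    intervalIntegral.integral_nonneg (by linarith [h.δ_le])
      fun x _ => periodIntegrand_nonneg r₁ r₂ r₃ x
  rw [← intervalIntegral.integral_add_adjacent_intervals (hint₁.trans hint₂) hint₃,
    ← intervalIntegral.integral_add_adjacent_intervals hint₁ hint₂]
  constructor <;> linarith

end RootsNearEnds

theorem cos_theta {z : ℝ} (h0 : 0 ≤ z) (h1 : z ≤ 1 / 27) : cos (theta (27 * z)) = 54 * z - 1 := by
  rw [theta, cos_arccos (by linarith) (by linarith)]
  ring

/-- Viète's trigonometric solution of the cubic `x (1 - x)² = 4 z`. -/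
theorem cubic_root_of_cos_three_mul {z φ : ℝ} (h : cos (3 * φ) = 1 - 54 * z) :
    2 / 3 * (1 - cos φ) * (1 - 2 / 3 * (1 - cos φ)) ^ 2 = 4 * z := by
  rw [cos_three_mul] at h
  linear_combination (-2 / 27 : ℝ) * h

theorem xminf_eq (z : ℝ) : xminf z = 2 / 3 * (1 - cos ((π - theta (27 * z)) / 3)) := by
  rw [xminf, ← cos_pi_div_two_sub]
  ring_nf

theorem xmaxf_eq (z : ℝ) : xmaxf z = 2 / 3 * (1 - cos ((π + theta (27 * z)) / 3)) := by
  rw [xmaxf, show (π + theta (27 * z)) / 3 = theta (27 * z) / 3 - π / 6 + π / 2 by ring,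
    cos_add_pi_div_two]
  ring

theorem xminf_root {z : ℝ} (h0 : 0 ≤ z) (h1 : z ≤ 1 / 27) :
    xminf z * (1 - xminf z) ^ 2 = 4 * z ∧ xminf z ≤ 1 / 3 := by
  have hθ₀ := arccos_nonneg (2 * (27 * z) - 1)
  have hθπ := arccos_le_pi (2 * (27 * z) - 1)
  rw [← theta] at hθ₀ hθπ
  have hcos : cos (π / 3) ≤ cos ((π - theta (27 * z)) / 3) :=
    cos_le_cos_of_nonneg_of_le_pi (by linarith) (by linarith [pi_pos]) (by linarith)
  rw [cos_pi_div_three] at hcos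
  rw [xminf_eq]
  refine ⟨cubic_root_of_cos_three_mul ?_, by linarith⟩
  rw [mul_div_cancel₀ _ three_ne_zero, cos_pi_sub, cos_theta h0 h1]
  ring

theorem xmaxf_root {z : ℝ} (h0 : 0 ≤ z) (h1 : z ≤ 1 / 27) :
    xmaxf z * (1 - xmaxf z) ^ 2 = 4 * z ∧ 1 / 3 ≤ xmaxf z ∧ xmaxf z ≤ 1 := by
  have hθ₀ := arccos_nonneg (2 * (27 * z) - 1)
  have hθπ := arccos_le_pi (2 * (27 * z) - 1)
  rw [← theta] at hθ₀ hθπ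
  have hcos₁ : cos ((π + theta (27 * z)) / 3) ≤ cos (π / 3) :=
    cos_le_cos_of_nonneg_of_le_pi (by linarith [pi_pos]) (by linarith) (by linarith)
  have hcos₂ : cos (π - π / 3) ≤ cos ((π + theta (27 * z)) / 3) :=
    cos_le_cos_of_nonneg_of_le_pi (by linarith [pi_pos]) (by linarith [pi_pos]) (by linarith)
  rw [cos_pi_sub, cos_pi_div_three] at hcos₂
  rw [cos_pi_div_three] at hcos₁
  rw [xmaxf_eq]
  refine ⟨cubic_root_of_cos_three_mul ?_, by linarith, by linarith⟩
  rw [mul_div_cancel₀ _ three_ne_zero, add_comm, cos_add_pi, cos_theta h0 h1]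
  ring

theorem xminf_lt_xmaxf {z : ℝ} (h0 : 0 ≤ z) (h1 : z < 1 / 27) : xminf z < xmaxf z := by
  obtain ⟨hroot, hle⟩ := xminf_root h0 h1.le
  obtain ⟨-, hge, -⟩ := xmaxf_root h0 h1.le
  refine lt_of_le_of_ne (hle.trans hge) fun heq => ?_
  have : xminf z = 1 / 3 := le_antisymm hle (heq ▸ hge)
  rw [this] at hroot
  linarith

theorem small_root_bounds {z r : ℝ} (hz : 0 < z) (hr : r ≤ 1 / 3) (h : r * (1 - r) ^ 2 = 4 * z) :
    4 * z ≤ r ∧ r ≤ 9 * z := by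
  have hr0 : 0 < r := by
    by_contra! hr0
    nlinarith [sq_nonneg (1 - r)]
  have hsq₁ : (1 - r) ^ 2 ≤ 1 := by nlinarith
  have hsq₂ : 4 / 9 ≤ (1 - r) ^ 2 := by nlinarith
  constructor
  · nlinarith [mul_le_mul_of_nonneg_left hsq₁ hr0.le]
  · nlinarith [mul_le_mul_of_nonneg_left hsq₂ hr0.le]

theorem large_root_bounds {z r : ℝ} (hr : 1 / 3 ≤ r) (hr1 : r ≤ 1) (h : r * (1 - r) ^ 2 = 4 * z) :
    4 * z ≤ (1 - r) ^ 2 ∧ (1 - r) ^ 2 ≤ 12 * z := by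
  constructor <;> nlinarith [sq_nonneg (1 - r)]

theorem cubic_factor {z r₁ r₂ : ℝ} (h₁ : r₁ * (1 - r₁) ^ 2 = 4 * z)
    (h₂ : r₂ * (1 - r₂) ^ 2 = 4 * z) (hne : r₁ ≠ r₂) (x : ℝ) :
    x * (1 - x) ^ 2 - 4 * z = (x - r₁) * (x - r₂) * (x - (2 - r₁ - r₂)) := by
  have hsym : r₁ ^ 2 + r₁ * r₂ + r₂ ^ 2 - 2 * r₁ - 2 * r₂ + 1 = 0 := by
    refine (mul_eq_zero.1 ?_).resolve_left (sub_ne_zero.2 hne)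
    linear_combination h₁ - h₂
  linear_combination (x - r₁) * hsym + h₁

theorem xminf_bounds {z : ℝ} (hz : 0 < z) (h1 : z ≤ 1 / 27) :
    4 * z ≤ xminf z ∧ xminf z ≤ 9 * z :=
  small_root_bounds hz (xminf_root hz.le h1).2 (xminf_root hz.le h1).1

theorem one_sub_xmaxf_bounds {z : ℝ} (hz : 0 < z) (h1 : z ≤ 1 / 27) :
    2 * √z ≤ 1 - xmaxf z ∧ 1 - xmaxf z ≤ 4 * √z := by
  obtain ⟨hroot, hge, hle⟩ := xmaxf_root hz.le h1
  obtain ⟨hlow, hup⟩ := large_root_bounds hge hle hroot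
  have hs := Real.sq_sqrt hz.le
  have := Real.sqrt_nonneg z
  constructor <;> nlinarith

theorem xminf_mul_xmaxf_mul {z : ℝ} (h0 : 0 ≤ z) (h1 : z < 1 / 27) :
    xminf z * xmaxf z * (2 - xminf z - xmaxf z) = 4 * z := by
  linear_combination cubic_factor (xminf_root h0 h1.le).1 (xmaxf_root h0 h1.le).1
    (xminf_lt_xmaxf h0 h1).ne 0

theorem root_gap_bounds {z : ℝ} (hz : 0 < z) (h1 : z ≤ 1 / 81) :
    √z ≤ (2 - xminf z - xmaxf z) - xmaxf z ∧ (2 - xminf z - xmaxf z) - xmaxf z ≤ 8 * √z := by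
  obtain ⟨hr₁, hr₁'⟩ := xminf_bounds hz (by linarith)
  obtain ⟨hr₂, hr₂'⟩ := one_sub_xmaxf_bounds hz (by linarith)
  have hs := Real.sq_sqrt hz.le
  have hs' : √z ≤ 1 / 9 := by
    rw [Real.sqrt_le_left (by norm_num)]
    linarith
  constructor <;> nlinarith [Real.sqrt_nonneg z]

theorem rootsNearEnds_xminf_xmaxf {δ z : ℝ} (hδ₀ : 0 < δ) (hδ : δ ≤ 1 / 8) (hz : 0 < z)
    (hzδ : z ≤ δ ^ 2 / 100) : RootsNearEnds δ (xminf z) (xmaxf z) (2 - xminf z - xmaxf z) := by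
  have hz81 : z ≤ 1 / 81 := by nlinarith
  obtain ⟨hr₁, hr₁'⟩ := xminf_bounds hz (by linarith)
  obtain ⟨hr₂, hr₂'⟩ := one_sub_xmaxf_bounds hz (by linarith)
  obtain ⟨hgap, -⟩ := root_gap_bounds hz hz81
  have hprod := xminf_mul_xmaxf_mul hz.le (by linarith)
  have hs := Real.sqrt_pos.2 hz
  have hsδ : √z ≤ δ / 10 := by
    rw [Real.sqrt_le_left (by nlinarith [Real.sqrt_nonneg z])]
    linarith
  exact ⟨hδ, by linarith, by nlinarith, by linarith, by linarith, by linarith,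
    le_of_mul_le_mul_left (by nlinarith) (by linarith : 0 < xminf z)⟩

theorem Tfun_eq {z : ℝ} (hz : 0 < z) (h1 : z < 1 / 27) :
    Tfun z = 2 * ∫ x in xminf z..xmaxf z,
      periodIntegrand (xminf z) (xmaxf z) (2 - xminf z - xmaxf z) x := by
  have hr₁ := (xminf_bounds hz h1.le).1
  have hfac := cubic_factor (xminf_root hz.le h1.le).1 (xmaxf_root hz.le h1.le).1
    (xminf_lt_xmaxf hz.le h1).ne
  rw [Tfun]
  congr 1
  refine intervalIntegral.integral_congr fun x hx => ?_
  rw [uIcc_of_le (xminf_lt_xmaxf hz.le h1).le] at hx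
  have hpoly : x ^ 2 * (1 - x) ^ 2 - 4 * z * x
      = x * (x - xminf z) * ((xmaxf z - x) * (2 - xminf z - xmaxf z - x)) := by
    linear_combination x * hfac x
  rw [hpoly, one_div, Real.sqrt_mul (mul_nonneg (by linarith [hx.1]) (by linarith [hx.1])),
    mul_inv, periodIntegrand]

theorem Tfun_bounds {δ z : ℝ} (hδ₀ : 0 < δ) (hδ : δ ≤ 1 / 8) (hz : 0 < z) (hzδ : z ≤ δ ^ 2 / 100) :
    -3 * log z + 2 * (log δ + log (δ / 2) - log 72) ≤ Tfun z ∧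
      Tfun z ≤ (1 + 4 * δ) * (-3 * log z) + 8 / δ ^ 2 := by
  have h := rootsNearEnds_xminf_xmaxf hδ₀ hδ hz hzδ
  have hz81 : z ≤ 1 / 81 := by nlinarith
  obtain ⟨hr₁, hr₁'⟩ := xminf_bounds hz (by linarith)
  obtain ⟨hgap, hgap'⟩ := root_gap_bounds hz hz81
  rw [Tfun_eq hz (by linarith)]
  obtain ⟨hlow, hup⟩ := h.integral_bounds
  set r₁ := xminf z
  set r₂ := xmaxf z
  have hs := Real.sqrt_pos.2 hz
  have hlog₁ : log z ≤ log r₁ := Real.log_le_log hz (by linarith)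
  have hlog₁' : log r₁ ≤ log 9 + log z := by
    rw [← Real.log_mul (by norm_num) hz.ne']
    exact Real.log_le_log h.r₁_pos hr₁'
  have hlog₂ : log z / 2 ≤ log (2 - r₁ - r₂ - r₂) := by
    rw [← Real.log_sqrt hz.le]
    exact Real.log_le_log hs hgap
  have hlog₂' : log (2 - r₁ - r₂ - r₂) ≤ log 8 + log z / 2 := by
    rw [← Real.log_sqrt hz.le, ← Real.log_mul (by norm_num) hs.ne']
    exact Real.log_le_log (hs.trans_le hgap) hgap'
  have h72 : log 72 = log 9 + log 8 := by
    rw [← Real.log_mul (by norm_num) (by norm_num)]; norm_num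
  have hmain : (1 + 4 * δ) * (-log r₁ - log (2 - r₁ - r₂ - r₂)) ≤ (1 + 4 * δ) * (-3 / 2 * log z) :=
    mul_le_mul_of_nonneg_left (by linarith) (by linarith)
  have h8 : 8 / δ ^ 2 = 2 * (4 / δ ^ 2) := by ring
  constructor <;> linarith

/-- T(z) ~ -3 ln z as z → 0⁺, i.e. T(z)/(-3 ln z) → 1. -/
theorem stmt_11 :
    Tendsto (fun z => Tfun z / (-3 * Real.log z)) (nhdsWithin 0 (Ioi 0)) (nhds 1) := by
  have hL : Tendsto (fun z => -3 * log z) (𝓝[>] 0) atTop := by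
    simpa using (tendsto_neg_atBot_atTop.comp tendsto_log_nhdsGT_zero).const_mul_atTop three_pos
  refine tendsto_div_one_of_bounds hL ⟨-2 * (log (1 / 8) + log (1 / 8 / 2) - log 72), ?_⟩
    fun ε hε => ?_
  · filter_upwards [Ioo_mem_nhdsGT (by norm_num : (0 : ℝ) < 1 / 6400)] with z hz
    linarith [(Tfun_bounds (by norm_num) le_rfl hz.1 (by linarith [hz.2])).1]
  · set δ := min (1 / 8) (ε / 4)
    have hδ₀ : 0 < δ := lt_min (by norm_num) (by positivity)
    refine ⟨8 / δ ^ 2, ?_⟩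
    filter_upwards [Ioo_mem_nhdsGT (by positivity : 0 < δ ^ 2 / 100),
      Ioo_mem_nhdsGT one_pos] with z hz hz₁
    have hK : (1 + 4 * δ) * (-3 * log z) ≤ (1 + ε) * (-3 * log z) :=
      mul_le_mul_of_nonneg_right (by linarith [min_le_right (1 / 8) (ε / 4)])
        (by linarith [log_neg hz₁.1 hz₁.2])
    linarith [(Tfun_bounds hδ₀ (min_le_left _ _) hz.1 hz.2.le).2]
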